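/- (The logical algebra of the pure gauge Gauss law code.) Assume the lattice is connected. For h : L → G let T^h : H → H be the electric translation operator (T^h f) a = f (fun ℓ => (h ℓ)⁻¹ * a ℓ). Then a linear map O : H → H commutes with the gauge transformation U^g for every g : V → G if and only if O lies in the complex linear span of the operators W^μ ∘ T^h, where μ : L → Ĝ ranges over families with ∂ μ = 1 and h ranges over L → G. In other words, the commutant of the gauge group is spanned exactly by the Weyl operators whose Wilson-line part has trivial Gauss law syndrome. -/

import Mathlib

open Finset

variable {V L : Type*} [Fintype V] [Fintype L] [DecidableEq V]
variable {G : Type*} [CommGroup G] [Fintype G]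

/-- The gauge transformation `U^g` on the kinematical Hilbert space `(L → G) → ℂ`. -/
def Ugauge (s t : L → V) (g : V → G) : ((L → G) → ℂ) → ((L → G) → ℂ) :=
  fun f a => f fun ℓ => (g (s ℓ))⁻¹ * a ℓ * g (t ℓ)

/-- The Wilson line (multiplication) operator `W^χ` for a family of characters `χ`. -/
def Wline (χ : L → (G →* ℂˣ)) : ((L → G) → ℂ) → ((L → G) → ℂ) :=
  fun f a => (((∏ ℓ, χ ℓ (a ℓ))⁻¹ : ℂˣ) : ℂ) • f a

/-- The Gauss law map `∂`, assigning to link character data the vertex charge it excites. -/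
def gaussMap (s t : L → V) (χ : L → (G →* ℂˣ)) : V → (G →* ℂˣ) :=
  fun v => (∏ ℓ ∈ univ.filter fun ℓ => s ℓ = v, χ ℓ) *
    ∏ ℓ ∈ univ.filter fun ℓ => t ℓ = v, (χ ℓ)⁻¹

/-- The electric translation operator `T^h`. -/
def elecTrans (h : L → G) : ((L → G) → ℂ) → ((L → G) → ℂ) :=
  fun f a => f fun ℓ => (h ℓ)⁻¹ * a ℓ

/-- The simple graph on the vertices of a lattice. -/
def latticeGraph {V' L' : Type*} (s t : L' → V') : SimpleGraph V' :=
  SimpleGraph.fromRel fun v w => ∃ ℓ, s ℓ = v ∧ t ℓ = w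

/-! Since `G` is commutative, the gauge transformation `U^g` is the electric translation by
`ℓ ↦ g (s ℓ) / g (t ℓ)`, so the gauge group acts on `ℂ^A`, `A = L → G`, through a subgroup `B` of
translations. Every operator on `ℂ^A` is `∑ₕ φₕ · T^h`, and it commutes with `T^b` iff
every `φₕ` is `b`-invariant. Translations act diagonally on the basis of characters of `A`, so the
`B`-invariant functions are spanned by the characters trivial on `B`; and the character
`a ↦ ∏ ℓ, μ ℓ (a ℓ)` is trivial on the gauge translations exactly when `∂ μ = 1`. -/

open Submodule

theorem Module.Basis.mem_span_image_of_forall_apply_eq_self {ι κ R M : Type*} [CommRing R]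
    [IsDomain R] [AddCommGroup M] [Module R M] (e : Module.Basis ι R M) (T : κ → M →ₗ[R] M)
    (c : κ → ι → R) (hT : ∀ k i, T k (e i) = c k i • e i) {x : M} (hx : ∀ k, T k x = x) :
    x ∈ span R (e '' {i | ∀ k, c k i = 1}) := by
  rw [e.mem_span_image]
  intro i hi k
  have hcoord : (e.coord i).comp (T k) = c k i • e.coord i := e.ext fun j => by
    by_cases hij : j = i <;> simp [hT, hij]
  have hfixed : e.repr x i = c k i * e.repr x i := by
    simpa [hx k] using LinearMap.congr_fun hcoord x
  have : (c k i - 1) * e.repr x i = 0 := by linear_combination -hfixed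
  exact sub_eq_zero.mp ((mul_eq_zero.mp this).resolve_right (Finsupp.mem_support_iff.mp hi))

section FiniteCommGroup

variable {A : Type*} [CommGroup A]

variable (A) in
noncomputable def characterBasis [Finite A] :
    Module.Basis (A →* ℂˣ) ℂ (A → ℂ) :=
  have := Fintype.ofFinite A
  have := Fintype.ofFinite (A →* ℂˣ)
  basisOfLinearIndependentOfCardEqFinrank
    ((linearIndependent_monoidHom A ℂ).comp (fun χ => (Units.coeHom ℂ).comp χ)
      fun _ _ h => MonoidHom.ext fun a => Units.ext (DFunLike.congr_fun h a))
    (by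
      rw [Module.finrank_fintype_fun_eq_card, Fintype.card_eq_nat_card,
        CommGroup.card_monoidHom_of_hasEnoughRootsOfUnity, Nat.card_eq_fintype_card])

theorem characterBasis_apply [Finite A] (χ : A →* ℂˣ) :
    characterBasis A χ = fun a => (χ a : ℂ) := by
  funext a
  simp [characterBasis]

theorem mem_span_characters_of_forall_mul_apply [Finite A] {κ : Type*} (b : κ → A)
    {φ : A → ℂ} (hφ : ∀ k a, φ (b k * a) = φ a) :
    φ ∈ span ℂ ((fun χ : A →* ℂˣ => fun a => (χ a : ℂ)) '' {χ | ∀ k, χ (b k) = 1}) := by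
  have := (characterBasis A).mem_span_image_of_forall_apply_eq_self
    (fun k => LinearMap.funLeft ℂ ℂ (b k * ·)) (fun k χ => (χ (b k) : ℂ))
    (fun k χ => by funext a; simp [characterBasis_apply, LinearMap.funLeft])
    (fun k => funext (hφ k))
  simpa [characterBasis_apply, ← Units.val_eq_one] using this

def translationOp (h : A) : (A → ℂ) →ₗ[ℂ] (A → ℂ) :=
  LinearMap.funLeft ℂ ℂ (h⁻¹ * ·)

theorem translationOp_apply (h : A) (f : A → ℂ) (a : A) :
    translationOp h f a = f (h⁻¹ * a) :=
  rfl

theorem translationOp_single [DecidableEq A] (h x : A) (z : ℂ) :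
    translationOp h (Pi.single x z) = Pi.single (h * x) z := by
  funext a
  simp only [translationOp_apply, Pi.single_apply, inv_mul_eq_iff_eq_mul]

def weylOp (φ : A → ℂ) (h : A) (f : A → ℂ) : A → ℂ :=
  φ * translationOp h f

theorem weylOp_comp_translationOp {φ : A → ℂ} {b : A} (hφ : ∀ a, φ (b * a) = φ a) (h : A) :
    weylOp φ h ∘ translationOp b = translationOp b ∘ weylOp φ h := by
  funext f a
  have := hφ (b⁻¹ * a)
  simp only [mul_inv_cancel_left] at this
  simp only [Function.comp_apply, weylOp, Pi.mul_apply, translationOp_apply, this,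
    mul_left_comm]

theorem weylOp_mem_span_image {S : Set (A → ℂ)} {φ : A → ℂ} (hφ : φ ∈ span ℂ S) (h : A) :
    weylOp φ h ∈ span ℂ ((weylOp · h) '' S) := by
  have := mem_map_of_mem (f := LinearMap.pi fun f => LinearMap.mulRight ℂ (translationOp h f)) hφ
  rwa [map_span] at this

/-- The `h`-th diagonal `a ↦ O (a, h⁻¹ a)` of the matrix of `O`. -/
def weylCoeff [DecidableEq A] (O : (A → ℂ) →ₗ[ℂ] (A → ℂ)) (h : A) : A → ℂ :=
  fun a => O (Pi.single (h⁻¹ * a) 1) a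

theorem coe_eq_sum_weylOp [Fintype A] [DecidableEq A] (O : (A → ℂ) →ₗ[ℂ] (A → ℂ)) :
    ⇑O = ∑ h, weylOp (weylCoeff O h) h := by
  funext f a
  have hsingle (x : A) : (fun y => if x = y then (1 : ℂ) else 0) = Pi.single x 1 := by
    funext y
    simp [Pi.single_apply, eq_comm]
  rw [LinearMap.pi_apply_eq_sum_univ O f]
  simp only [Finset.sum_apply]
  refine (Fintype.sum_equiv ((Equiv.inv A).trans (Equiv.mulRight a))
    (fun h => weylOp (weylCoeff O h) h f a) _ fun h => ?_).symm
  simp [weylOp, weylCoeff, translationOp_apply, hsingle, mul_comm]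

theorem weylCoeff_mul_apply [DecidableEq A] {O : (A → ℂ) →ₗ[ℂ] (A → ℂ)} {b : A}
    (hO : ⇑O ∘ translationOp b = translationOp b ∘ ⇑O) (h a : A) :
    weylCoeff O h (b * a) = weylCoeff O h a := by
  have := congrFun (congrFun hO (Pi.single (h⁻¹ * a) 1)) (b * a)
  simp only [Function.comp_apply, translationOp_single, translationOp_apply,
    inv_mul_cancel_left] at this
  rw [weylCoeff, weylCoeff, mul_left_comm, this]

theorem commute_translationOp_iff_mem_span [Finite A] {κ : Type*} (b : κ → A)
    (O : (A → ℂ) →ₗ[ℂ] (A → ℂ)) :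
    (∀ k, ⇑O ∘ translationOp (b k) = translationOp (b k) ∘ ⇑O) ↔
      ⇑O ∈ span ℂ {F | ∃ χ : A →* ℂˣ, ∃ h, (∀ k, χ (b k) = 1) ∧
        F = weylOp (fun a => (χ a : ℂ)) h} := by
  classical
  cases nonempty_fintype A
  constructor
  · intro hO
    rw [coe_eq_sum_weylOp O]
    refine sum_mem fun h _ => ?_
    have hcoeff := mem_span_characters_of_forall_mul_apply b
      (fun k => weylCoeff_mul_apply (hO k) h)
    refine span_mono ?_ (weylOp_mem_span_image hcoeff h)
    rintro _ ⟨_, ⟨χ, hχ, rfl⟩, rfl⟩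
    exact ⟨χ, h, hχ, rfl⟩
  · intro hO k
    -- the commutant of `translationOp (b k)` is the equalizer of two linear maps in `F`
    suffices span ℂ _ ≤ LinearMap.eqLocus (LinearMap.funLeft ℂ _ (translationOp (b k)))
        (LinearMap.compLeft (translationOp (b k)) _) from this hO
    rw [span_le]
    rintro _ ⟨χ, h, hχ, rfl⟩
    exact weylOp_comp_translationOp (fun a => by simp [hχ k]) h

end FiniteCommGroup

section PiCharacters

variable {ι G M : Type*} [Fintype ι] [CommGroup G] [CommMonoid M]

def prodEval (μ : ι → G →* M) : (ι → G) →* M :=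
  ∏ i, (μ i).comp (Pi.evalMonoidHom _ i)

theorem prodEval_apply (μ : ι → G →* M) (a : ι → G) : prodEval μ a = ∏ i, μ i (a i) := by
  simp [prodEval]

theorem prodEval_surjective : Function.Surjective (prodEval : (ι → G →* M) → (ι → G) →* M) := by
  classical
  exact (Pi.monoidHomMulEquiv _ M).symm.surjective

theorem prodEval_eq_one_iff [DecidableEq ι] {μ : ι → G →* M} : prodEval μ = 1 ↔ μ = 1 :=
  (Pi.monoidHomMulEquiv _ M).symm.map_eq_one_iff

theorem prod_prod_fiber_apply {κ : Type*} [Fintype κ] [DecidableEq κ] (s : ι → κ)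
    (μ : ι → G →* M) (g : κ → G) :
    ∏ k, (∏ i ∈ univ.filter (s · = k), μ i) (g k) = ∏ i, μ i (g (s i)) := by
  simp only [MonoidHom.finsetProd_apply]
  rw [← Finset.prod_fiberwise univ s]
  refine Finset.prod_congr rfl fun k _ => Finset.prod_congr rfl fun i hi => ?_
  rw [(Finset.mem_filter.mp hi).2]

end PiCharacters

def gaugeShift {V L G : Type*} [CommGroup G] (s t : L → V) : (V → G) →* (L → G) :=
  MonoidHom.pi fun ℓ => Pi.evalMonoidHom (fun _ => G) (s ℓ) / Pi.evalMonoidHom _ (t ℓ)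

theorem gaugeShift_apply {V L G : Type*} [CommGroup G] (s t : L → V) (g : V → G) (ℓ : L) :
    gaugeShift s t g ℓ = g (s ℓ) / g (t ℓ) := rfl

theorem Ugauge_eq_translationOp {V L G : Type*} [CommGroup G] (s t : L → V) (g : V → G) :
    Ugauge s t g = translationOp (gaugeShift s t g) := by
  funext f a
  simp only [Ugauge, translationOp_apply]
  congr 1
  funext ℓ
  rw [Pi.mul_apply, Pi.inv_apply, gaugeShift_apply, inv_div, div_eq_mul_inv, mul_right_comm,
    mul_comm (g (t ℓ))]

theorem prodEval_comp_gaugeShift {V L G : Type*} [Fintype V] [Fintype L] [DecidableEq V]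
    [CommGroup G] (s t : L → V) (μ : L → G →* ℂˣ) :
    (prodEval μ).comp (gaugeShift s t) = prodEval (gaussMap s t μ) := by
  refine MonoidHom.ext fun g => ?_
  simp only [MonoidHom.comp_apply, prodEval_apply, gaussMap, MonoidHom.mul_apply,
    prod_mul_distrib, prod_prod_fiber_apply, gaugeShift_apply, div_eq_mul_inv, map_mul,
    map_inv, MonoidHom.inv_apply]

theorem gaussMap_eq_one_iff {V L G : Type*} [Fintype V] [Fintype L] [DecidableEq V]
    [CommGroup G] (s t : L → V) (μ : L → G →* ℂˣ) :
    gaussMap s t μ = 1 ↔ ∀ g, prodEval μ (gaugeShift s t g) = 1 := by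
  rw [← prodEval_eq_one_iff, ← prodEval_comp_gaugeShift, DFunLike.ext_iff]
  rfl

theorem Wline_comp_elecTrans {L G : Type*} [Fintype L] [CommGroup G] (μ : L → G →* ℂˣ)
    (h : L → G) : Wline μ ∘ elecTrans h = weylOp (fun a => ((prodEval μ)⁻¹ a : ℂ)) h := by
  funext f a
  simp only [Function.comp_apply, Wline, elecTrans, weylOp, Pi.mul_apply, translationOp_apply,
    MonoidHom.inv_apply, prodEval_apply, smul_eq_mul]
  rfl

theorem setOf_Wline_comp_elecTrans_eq {V L G : Type*} [Fintype V] [Fintype L] [DecidableEq V]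
    [CommGroup G] (s t : L → V) :
    {F : ((L → G) → ℂ) → ((L → G) → ℂ) |
      ∃ μ : L → (G →* ℂˣ), ∃ h : L → G, gaussMap s t μ = 1 ∧ F = Wline μ ∘ elecTrans h} =
      {F | ∃ χ : (L → G) →* ℂˣ, ∃ h, (∀ g, χ (gaugeShift s t g) = 1) ∧
        F = weylOp (fun a => (χ a : ℂ)) h} := by
  ext F
  constructor
  · rintro ⟨μ, h, hμ, rfl⟩
    refine ⟨(prodEval μ)⁻¹, h, fun g => ?_, Wline_comp_elecTrans μ h⟩
    rw [MonoidHom.inv_apply, (gaussMap_eq_one_iff s t μ).mp hμ g, inv_one]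
  · rintro ⟨χ, h, hχ, rfl⟩
    obtain ⟨μ, hμ⟩ := prodEval_surjective χ⁻¹
    refine ⟨μ, h, (gaussMap_eq_one_iff s t μ).mpr fun g => by simp [hμ, hχ g], ?_⟩
    rw [Wline_comp_elecTrans, hμ, inv_inv]

theorem commutant_eq_span_weyl_general (s t : L → V)
    (O : ((L → G) → ℂ) →ₗ[ℂ] ((L → G) → ℂ)) :
    (∀ g : V → G, ⇑O ∘ Ugauge s t g = Ugauge s t g ∘ ⇑O) ↔
      ⇑O ∈ Submodule.span ℂ
        {F : ((L → G) → ℂ) → ((L → G) → ℂ) |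
          ∃ μ : L → (G →* ℂˣ), ∃ h : L → G,
            gaussMap s t μ = 1 ∧ F = Wline μ ∘ elecTrans h} := by
  simp only [Ugauge_eq_translationOp]
  rw [setOf_Wline_comp_elecTrans_eq]
  exact commute_translationOp_iff_mem_span (gaugeShift s t) O

/-- The logical algebra of the pure gauge Gauss law code: a linear map `O` on the
kinematical Hilbert space commutes with every gauge transformation if and only if it lies
in the complex linear span of the Weyl operators `W^μ ∘ T^h` whose Wilson-line part `μ`
has trivial Gauss law syndrome. -/
theorem commutant_eq_span_weyl (s t : L → V)
    (hconn : Nonempty V ∧ (latticeGraph s t).Connected)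
    (O : ((L → G) → ℂ) →ₗ[ℂ] ((L → G) → ℂ)) :
    (∀ g : V → G, ⇑O ∘ Ugauge s t g = Ugauge s t g ∘ ⇑O) ↔
      ⇑O ∈ Submodule.span ℂ
        {F : ((L → G) → ℂ) → ((L → G) → ℂ) |
          ∃ μ : L → (G →* ℂˣ), ∃ h : L → G,
            gaussMap s t μ = 1 ∧ F = Wline μ ∘ elecTrans h} :=
  commutant_eq_span_weyl_general s t O
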